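/- arXiv:1408.3346 — 6 statements merged into one kernel-verified Lean document; each statement's English description precedes it below -/
import Mathlib

section
/- Let d be a natural number and N an endomorphism of an abelian group A with N^{d+1} = 0. For j ≥ 0 define F^j = Σ_i ( ker(N^{i+1}) ∩ im(N^{i-d+2j}) ), where N^m is interpreted as the identity when m ≤ 0. Then F^j ⊆ ker(N^{d+1-j}) for all 0 ≤ j ≤ d. -/
/-- For an endomorphism `N` of an abelian group `A` with `N^(d+1) = 0`,
the subgroup `F^j = ⨆ i, ker(N^(i+1)) ⊓ im(N^(i-d+2j))` (negative powers read as the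
identity, encoded via truncated subtraction) satisfies `F^j ⊆ ker(N^(d+1-j))`
for all `0 ≤ j ≤ d`. -/
theorem stmt0 (A : Type*) [AddCommGroup A] (d : ℕ) (N : AddMonoid.End A)
    (hN : N ^ (d + 1) = 0) :
    ∀ j ≤ d,
      (⨆ i : ℕ, (AddMonoidHom.ker (N ^ (i + 1)) ⊓ AddMonoidHom.range (N ^ (i + 2 * j - d))))
        ≤ AddMonoidHom.ker (N ^ (d + 1 - j)) := by
  intro j hj
  refine iSup_le fun i => ?_
  rintro x ⟨hk, y, rfl⟩
  by_cases h : i ≤ d - j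
  · have hpow : (N ^ (d + 1 - j)) = (N ^ (d - j - i)) * (N ^ (i + 1)) := by
      rw [← pow_add]; congr 1; omega
    have hk' : (N ^ (i + 1)) ((N ^ (i + 2 * j - d)) y) = 0 := hk
    rw [hpow]
    show (N ^ (d - j - i)) ((N ^ (i + 1)) ((N ^ (i + 2 * j - d)) y)) = 0
    rw [hk', map_zero]
  · have hpow : (N ^ (d + 1 - j)) * (N ^ (i + 2 * j - d))
        = (N ^ (i + j - d)) * (N ^ (d + 1)) := by
      rw [← pow_add, ← pow_add]; congr 1; omega
    show ((N ^ (d + 1 - j)) * (N ^ (i + 2 * j - d))) y = 0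
    rw [hpow, hN]
    simp
end

section
/- Let d ∈ ℕ and let N be an endomorphism of an abelian group A with N^{d+1} = 0. Suppose for all j ≥ 0 the two subgroups Σ_i ker(N^{i+1}) ∩ im(N^{i-d+2j}) and Σ_i ker(N^{i+1}) ∩ im(N^{i-d+2j-1}) coincide; call this common subgroup F^j. If moreover ker(N) = F^d, then for all 0 ≤ j ≤ d+1 we have ker(N^{d+1-j}) = F^j and im(N^j) = F^j. -/
/-!
Write `K m = ker N^m` and `R m = im N^m`. Nilpotency alone gives `R j ≤ F j ≤ K (d+1-j)`, and
every summand of `F d` lies in `R d`, so `K 1 ≤ R d`. This propagates to `K m ≤ R (d+1-m)`: if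
`N^(m+1) x = 0`, write `N^m x = N^d z`; then `x - N^(d-m) z ∈ K m ≤ R (d+1-m)`, so `x ∈ R (d-m)`.
The three inclusions `K (d+1-j) ≤ R j ≤ F j ≤ K (d+1-j)` close up into a cycle.
-/

open AddMonoidHom

namespace AddMonoid.End

variable {A : Type*} [AddCommGroup A] (N : AddMonoid.End A)

def monodromyFiltration (d j : ℕ) : AddSubgroup A :=
  ⨆ i : ℕ, ker (N ^ (i + 1)) ⊓ range (N ^ (i + 2 * j - d))

theorem pow_add_apply (a b : ℕ) (x : A) : (N ^ (a + b)) x = (N ^ a) ((N ^ b) x) := by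
  rw [pow_add]
  rfl

theorem ker_pow_le_ker_pow {m n : ℕ} (h : m ≤ n) : ker (N ^ m) ≤ ker (N ^ n) := by
  intro x (hx : (N ^ m) x = 0)
  show (N ^ n) x = 0
  rw [← Nat.sub_add_cancel h, pow_add_apply, hx, map_zero]

theorem range_pow_le_range_pow {m n : ℕ} (h : m ≤ n) : range (N ^ n) ≤ range (N ^ m) := by
  rintro _ ⟨y, rfl⟩
  refine ⟨(N ^ (n - m)) y, ?_⟩
  show (N ^ m) ((N ^ (n - m)) y) = (N ^ n) y
  rw [← pow_add_apply, Nat.add_sub_cancel' h]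

theorem range_pow_le_ker_pow {d m n : ℕ} (hN : N ^ (d + 1) = 0) (h : d + 1 ≤ m + n) :
    range (N ^ m) ≤ ker (N ^ n) := by
  rintro _ ⟨y, rfl⟩
  show (N ^ n) ((N ^ m) y) = 0
  rw [← pow_add_apply, pow_eq_zero_of_le (by omega) hN]
  rfl

theorem ker_pow_le_range_pow {d : ℕ} (hker : ker (N : A →+ A) ≤ range (N ^ d)) (m : ℕ) :
    ker (N ^ m) ≤ range (N ^ (d + 1 - m)) := by
  induction m with
  | zero =>
    intro x (hx : (N ^ 0) x = 0)
    exact ⟨0, (map_zero _).trans hx.symm⟩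
  | succ m ih =>
    intro x (hx : (N ^ (m + 1)) x = 0)
    rcases Nat.lt_or_ge d m with hdm | hmd
    · exact ⟨x, by rw [show d + 1 - (m + 1) = 0 by omega]; rfl⟩
    obtain ⟨z, hz⟩ := hker (show N ((N ^ m) x) = 0 by rw [← hx, pow_succ']; rfl)
    have hrest : (N ^ m) (x - (N ^ (d - m)) z) = 0 := by
      rw [map_sub, ← pow_add_apply, Nat.add_sub_cancel' hmd]
      exact sub_eq_zero.mpr hz.symm
    obtain ⟨w, hw⟩ := range_pow_le_range_pow N (show d - m ≤ d + 1 - m by omega) (ih hrest)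
    rw [show d + 1 - (m + 1) = d - m by omega]
    refine ⟨w + z, ?_⟩
    change (N ^ (d - m)) w = _ at hw
    show (N ^ (d - m)) (w + z) = x
    rw [map_add, hw, sub_add_cancel]

variable {N} {d : ℕ}

theorem range_pow_le_monodromyFiltration (hN : N ^ (d + 1) = 0) (j : ℕ) :
    range (N ^ j) ≤ monodromyFiltration N d j := by
  rcases Nat.lt_or_ge d j with hdj | hjd
  · rw [pow_eq_zero_of_le hdj hN]
    rintro _ ⟨y, rfl⟩
    exact zero_mem _
  refine le_iSup_of_le (d - j) (le_inf (range_pow_le_ker_pow N hN (by omega)) ?_)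
  rw [show d - j + 2 * j - d = j by omega]

theorem monodromyFiltration_le_ker_pow (hN : N ^ (d + 1) = 0) {j : ℕ} (hj : j ≤ d + 1) :
    monodromyFiltration N d j ≤ ker (N ^ (d + 1 - j)) := by
  refine iSup_le fun i => ?_
  by_cases h : i + 1 ≤ d + 1 - j
  · exact inf_le_left.trans (ker_pow_le_ker_pow N h)
  · exact inf_le_right.trans (range_pow_le_ker_pow N hN (by omega))

theorem monodromyFiltration_le_range_pow (j : ℕ) :
    monodromyFiltration N d j ≤ range (N ^ (2 * j - d)) :=
  iSup_le fun _ => inf_le_right.trans (range_pow_le_range_pow N (by omega))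

end AddMonoid.End

open AddMonoid.End in
theorem stmt1_general (A : Type*) [AddCommGroup A] (d : ℕ) (N : AddMonoid.End A)
    (hN : N ^ (d + 1) = 0) (F : ℕ → AddSubgroup A)
    (hF : ∀ j, F j =
      ⨆ i : ℕ, (AddMonoidHom.ker (N ^ (i + 1)) ⊓ AddMonoidHom.range (N ^ (i + 2 * j - d))))
    (hker : AddMonoidHom.ker (N : A →+ A) = F d) :
    ∀ j ≤ d + 1, AddMonoidHom.ker (N ^ (d + 1 - j)) = F j ∧
      AddMonoidHom.range (N ^ j) = F j := by
  obtain rfl : F = monodromyFiltration N d := funext hF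
  have hker_le : ker (N : A →+ A) ≤ range (N ^ d) := by
    simpa [hker, two_mul] using monodromyFiltration_le_range_pow (N := N) (d := d) d
  intro j hj
  have hker_range : ker (N ^ (d + 1 - j)) ≤ range (N ^ j) := by
    simpa [show d + 1 - (d + 1 - j) = j by omega] using ker_pow_le_range_pow N hker_le (d + 1 - j)
  have hrange_F := range_pow_le_monodromyFiltration hN j
  have hF_ker := monodromyFiltration_le_ker_pow hN hj
  exact ⟨le_antisymm (hker_range.trans hrange_F) hF_ker,
    le_antisymm hrange_F (hF_ker.trans hker_range)⟩

/-- Let `N` be an endomorphism of an abelian group `A` with `N^(d+1) = 0`.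
Suppose for every `j` the subgroups `⨆ i, ker(N^(i+1)) ⊓ im(N^(i-d+2j))` and
`⨆ i, ker(N^(i+1)) ⊓ im(N^(i-d+2j-1))` coincide, and call this common subgroup `F j`
(negative powers of `N` are read as the identity, encoded by truncated `ℕ`-subtraction).
If moreover `ker N = F d`, then `ker(N^(d+1-j)) = F j` and `im(N^j) = F j`
for all `0 ≤ j ≤ d+1`. -/
theorem stmt1 (A : Type*) [AddCommGroup A] (d : ℕ) (N : AddMonoid.End A)
    (hN : N ^ (d + 1) = 0) (F : ℕ → AddSubgroup A)
    (hF : ∀ j, F j =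
      ⨆ i : ℕ, (AddMonoidHom.ker (N ^ (i + 1)) ⊓ AddMonoidHom.range (N ^ (i + 2 * j - d))))
    (hF' : ∀ j, F j =
      ⨆ i : ℕ, (AddMonoidHom.ker (N ^ (i + 1)) ⊓ AddMonoidHom.range (N ^ (i + 2 * j - (d + 1)))))
    (hker : AddMonoidHom.ker (N : A →+ A) = F d) :
    ∀ j ≤ d + 1, AddMonoidHom.ker (N ^ (d + 1 - j)) = F j ∧
      AddMonoidHom.range (N ^ j) = F j :=
  stmt1_general A d N hN F hF hker
end

section
/- Let V be a finite-dimensional vector space over a field K, q an element of K that is not a root of unity, and φ, N linear endomorphisms of V with φ bijective and N∘φ = q·(φ∘N). Then N is nilpotent. -/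
/-!
Conjugation by `φ` is an algebra automorphism of `End V` sending `N` to `q • N`, hence `N ^ k`
to `q ^ k • N ^ k`. As long as `N ^ k ≠ 0`, `q ^ k` is therefore an eigenvalue of this
conjugation; these powers are pairwise distinct, while an endomorphism of the
finite-dimensional space `End V` has only finitely many eigenvalues.
-/

open Module

lemma pow_right_injective_of_ne_zero_of_pow_ne_one {G₀ : Type*} [GroupWithZero G₀] {q : G₀}
    (hq0 : q ≠ 0) (hq : ∀ n : ℕ, 1 ≤ n → q ^ n ≠ 1) :
    Function.Injective (q ^ · : ℕ → G₀) := by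
  have hu : Function.Injective (Units.mk0 q hq0 ^ · : ℕ → G₀ˣ) := by
    refine injective_pow_iff_not_isOfFinOrder.mpr fun hfin ↦ ?_
    obtain ⟨n, hn, hqn⟩ := isOfFinOrder_iff_pow_eq_one.mp hfin
    exact hq n hn (by simpa [Units.ext_iff] using hqn)
  exact fun i j hij ↦ hu (Units.ext (by simpa using hij))

lemma Module.End.exists_eq_zero_of_apply_eq_smul {R M : Type*} [CommRing R] [IsDomain R]
    [AddCommGroup M] [Module R M] [Module.Finite R M] [IsTorsionFree R M]
    (f : End R M) {μ : ℕ → R} (hμ : Function.Injective μ) {x : ℕ → M}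
    (hx : ∀ k, f (x k) = μ k • x k) : ∃ k, x k = 0 := by
  by_contra! hx0
  have hμf : ∀ k, f.HasEigenvalue (μ k) := fun k ↦
    hasEigenvalue_of_hasEigenvector (hasEigenvector_iff.mpr ⟨mem_eigenspace_iff.mpr (hx k), hx0 k⟩)
  exact Set.infinite_of_injective_forall_mem hμ hμf f.finite_hasEigenvalue

lemma AlgEquiv.isNilpotent_of_apply_eq_smul {K A : Type*} [Field K] [Ring A] [Algebra K A]
    [FiniteDimensional K A] (σ : A ≃ₐ[K] A) {q : K} (hq : ∀ n : ℕ, 1 ≤ n → q ^ n ≠ 1) {a : A}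
    (ha : σ a = q • a) : IsNilpotent a := by
  rcases eq_or_ne q 0 with rfl | hq0
  · exact ⟨1, by simpa using ha⟩
  have hpow : ∀ k, σ.toLinearMap (a ^ k) = q ^ k • a ^ k := fun k ↦ by
    rw [AlgEquiv.toLinearMap_apply, map_pow, ha, smul_pow]
  exact Module.End.exists_eq_zero_of_apply_eq_smul σ.toLinearMap
    (pow_right_injective_of_ne_zero_of_pow_ne_one hq0 hq) hpow

/-- Over a field `K`, if `q ∈ K` is not a root of unity, `V` is a
finite-dimensional `K`-vector space, `φ : V → V` is a bijective linear map, `N : V → V`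
is linear, and `N ∘ φ = q • (φ ∘ N)`, then `N` is nilpotent. -/
theorem stmt3 (K V : Type*) [Field K] [AddCommGroup V] [Module K V] [FiniteDimensional K V]
    (q : K) (hq : ∀ n : ℕ, 1 ≤ n → q ^ n ≠ 1)
    (φ N : V →ₗ[K] V) (hφ : Function.Bijective φ)
    (h : N ∘ₗ φ = q • (φ ∘ₗ N)) :
    IsNilpotent N := by
  let e := LinearEquiv.ofBijective φ hφ
  refine (e.symm.conjAlgEquiv K).isNilpotent_of_apply_eq_smul hq ?_
  ext v
  have hv : N (φ v) = q • φ (N v) := LinearMap.congr_fun h v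
  simp [LinearEquiv.conjAlgEquiv_apply, e, hv]
end

section
/- Let V be a finite-dimensional vector space over a field K, φ an endomorphism of V, and q ∈ K. Suppose V admits a φ-stable decreasing filtration (F^r)_{0 ≤ r ≤ d+1} with F^0 = V, F^{d+1} = 0, on whose graded piece F^r/F^{r+1} the induced map of φ equals multiplication by q^{d-r}, and suppose the elements q^0, q^1, ..., q^d of K are pairwise distinct. Then φ is diagonalizable on V precisely when V decomposes as the direct sum of the eigenspaces ker(φ - q^{d-r}), and in all cases F^r = ⊕_{s ≥ r} ker((φ - q^{d-s})^{n}) for n = dim V; in particular F^r equals the sum of the generalized eigenspaces of φ for the eigenvalues q^{d-s} with s ≥ r. -/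
open Module Polynomial

/-- A `φ`-stable submodule is stable under `aeval φ p` for any polynomial `p`. -/
lemma aux_stable_aeval {K V : Type*} [Field K] [AddCommGroup V] [Module K V]
    (φ : Module.End K V) (W : Submodule K V) (hW : W.map φ ≤ W)
    (p : K[X]) {x : V} (hx : x ∈ W) : (aeval φ) p x ∈ W := by
  have hpow : ∀ i : ℕ, (φ ^ i) x ∈ W := by
    intro i
    induction i with
    | zero => simpa using hx
    | succ i ih =>
        rw [pow_succ']
        exact hW ⟨_, ih, rfl⟩
  rw [aeval_eq_sum_range]
  simp only [LinearMap.coe_sum, Finset.sum_apply, LinearMap.smul_apply]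
  exact Submodule.sum_mem _ fun i _ => Submodule.smul_mem _ _ (hpow i)

/-- If `f ^ n` kills `x` and `c ≠ 0`, then `f + c • 1` is surjective on `ker (f ^ n)`. -/
lemma aux_surj_on_ker {K V : Type*} [Field K] [AddCommGroup V] [Module K V]
    (f : Module.End K V) (c : K) (hc : c ≠ 0) (n : ℕ) :
    LinearMap.ker (f ^ n) ≤ Submodule.map (f + c • 1) (LinearMap.ker (f ^ n)) := by
  intro x hx
  have hx0 : (f ^ n) x = 0 := hx
  set u : Module.End K V := -(c⁻¹ • f) with hu
  set S : Module.End K V := ∑ i ∈ Finset.range n, u ^ i with hS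
  refine ⟨c⁻¹ • S x, ?_, ?_⟩
  · -- membership: each `u ^ i x` is in the kernel
    have hmem : ∀ i : ℕ, (u ^ i) x ∈ LinearMap.ker (f ^ n) := by
      intro i
      have hcomm : Commute (f ^ n) (u ^ i) := by
        apply Commute.pow_pow
        simp only [hu]
        exact (Commute.refl f).smul_right _ |>.neg_right
      simp only [LinearMap.mem_ker]
      rw [← Module.End.mul_apply, hcomm.eq, Module.End.mul_apply, hx0, map_zero]
    refine Submodule.smul_mem _ _ ?_
    simp only [hS, LinearMap.coe_sum, Finset.sum_apply]
    exact Submodule.sum_mem _ fun i _ => hmem i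
  · -- the equation
    have key : (1 - u) * S = 1 - u ^ n := by
      have h1 : S * (u - 1) = u ^ n - 1 := geom_sum_mul u n
      have huS : Commute u S := Commute.sum_right _ _ _ fun i _ => (Commute.refl u).pow_right i
      have hcomm : Commute (1 - u) S := (Commute.one_left S).sub_left huS
      calc (1 - u) * S = S * (1 - u) := hcomm.eq
        _ = -(S * (u - 1)) := by noncomm_ring
        _ = 1 - u ^ n := by rw [h1]; noncomm_ring
    have hfc : f + c • 1 = c • (1 - u) := by
      have hcu : c • u = -f := by
        rw [hu, smul_neg, smul_smul, mul_inv_cancel₀ hc, one_smul]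
      rw [smul_sub, hcu, sub_neg_eq_add, add_comm]
    have hun : (u ^ n) x = 0 := by
      have : u ^ n = (-c⁻¹) ^ n • f ^ n := by
        rw [hu, ← neg_smul, _root_.smul_pow]
      rw [this, LinearMap.smul_apply, hx0, smul_zero]
    have := congrArg (fun g : Module.End K V => g x) key
    simp only [Module.End.mul_apply, LinearMap.sub_apply, Module.End.one_apply] at this
    rw [hun, sub_zero] at this
    calc (f + c • 1) (c⁻¹ • S x) = c⁻¹ • ((f + c • 1) (S x)) := by rw [map_smul]
      _ = c⁻¹ • ((c • (1 - u)) (S x)) := by rw [hfc]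
      _ = c⁻¹ • (c • ((1 - u) (S x))) := by rw [LinearMap.smul_apply]
      _ = c⁻¹ • (c • x) := by
          congr 1
          have : (1 - u) (S x) = ((1 - u) * S) x := rfl
          rw [this, key]
          simp [hun]
      _ = x := by rw [smul_smul, inv_mul_cancel₀ hc, one_smul]

/-- If `V` carries a `φ`-stable decreasing filtration `F^0 = V ⊇ … ⊇
F^{d+1} = 0` such that `φ` acts on `F^r/F^{r+1}` as the scalar `q^(d-r)`, and the
scalars `q^0, …, q^d` are pairwise distinct, then `F^r` is the sum of the generalized
eigenspaces `ker((φ - q^{d-s})^{dim V})` for `r ≤ s ≤ d`. -/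
theorem stmt11 (K V : Type*) [Field K] [AddCommGroup V] [Module K V] [FiniteDimensional K V]
    (q : K) (d : ℕ) (hq : ∀ r s, r ≤ d → s ≤ d → r ≠ s → q ^ (d - r) ≠ q ^ (d - s))
    (φ : Module.End K V) (F : ℕ → Submodule K V)
    (hanti : ∀ r, F (r + 1) ≤ F r) (hF0 : F 0 = ⊤) (hFtop : F (d + 1) = ⊥)
    (hstab : ∀ r, (F r).map φ ≤ F r)
    (hact : ∀ r ≤ d, ∀ x ∈ F r, φ x - q ^ (d - r) • x ∈ F (r + 1)) :
    ∀ r ≤ d + 1,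
      F r = ⨆ s ∈ Finset.Icc r d,
        LinearMap.ker ((φ - q ^ (d - s) • (1 : Module.End K V)) ^ (finrank K V)) := by
  rcases subsingleton_or_nontrivial V with hV | hV
  · haveI : Subsingleton (Submodule K V) := (Submodule.subsingleton_iff K).2 hV
    intro r _; exact Subsingleton.elim _ _
  set n := finrank K V with hn
  have hn1 : 0 < n := finrank_pos
  set lam : ℕ → K := fun s => q ^ (d - s) with hlam
  -- evaluating X - C (lam t) on an element
  have heval : ∀ (t : ℕ) (x : V), (aeval φ) (X - C (lam t)) x = φ x - lam t • x := by
    intro t x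
    simp [Module.algebraMap_end_apply]
  have hop : ∀ t : ℕ, (aeval φ) (X - C (lam t)) = φ - lam t • 1 := by
    intro t
    ext x
    simp [Module.algebraMap_end_apply]
  -- monotonicity of the filtration
  have hmono : ∀ a b : ℕ, a ≤ b → F b ≤ F a := by
    intro a b hab
    induction b with
    | zero => simpa [Nat.le_zero.1 hab]
    | succ b ih =>
        rcases Nat.lt_or_ge a (b + 1) with h | h
        · exact le_trans (hanti b) (ih (Nat.lt_succ_iff.1 h))
        · have : a = b + 1 := le_antisymm hab h
          simp [this]
  -- key product lemma
  have hprod : ∀ b a : ℕ, a + b ≤ d + 1 → ∀ x ∈ F a,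
      (aeval φ) (∏ t ∈ Finset.Ico a (a + b), (X - C (lam t))) x ∈ F (a + b) := by
    intro b
    induction b with
    | zero => intro a _ x hx; simpa using hx
    | succ b ih =>
        intro a hab x hx
        have ha : a ≤ d := by omega
        have hlt : a < a + (b + 1) := by omega
        rw [Finset.prod_eq_prod_Ico_succ_bot hlt, mul_comm, map_mul, Module.End.mul_apply,
          heval]
        have h1 : φ x - lam a • x ∈ F (a + 1) := hact a ha x hx
        have h2 := ih (a + 1) (by omega) _ h1
        have heq : a + 1 + b = a + (b + 1) := by omega
        rw [heq] at h2
        exact h2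
  -- part (a): each generalized eigenspace is inside F s
  have parta : ∀ s ≤ d, LinearMap.ker ((φ - lam s • 1) ^ n) ≤ F s := by
    intro s hs x hx
    have hx0 : ((φ - lam s • 1) ^ n) x = 0 := hx
    set P : K[X] := ∏ t ∈ Finset.Ico 0 s, (X - C (lam t)) with hP
    have hcop : IsCoprime P ((X - C (lam s)) ^ n) := by
      apply IsCoprime.prod_left
      intro t ht
      apply IsCoprime.pow_right
      apply isCoprime_X_sub_C_of_isUnit_sub
      have htd : t ≤ d := by
        have := Finset.mem_Ico.1 ht
        omega
      have hts : t ≠ s := by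
        have := Finset.mem_Ico.1 ht
        omega
      exact (sub_ne_zero_of_ne (hq t s htd hs hts)).isUnit
    obtain ⟨u, v, huv⟩ := hcop
    have hx' : x = (aeval φ) (u * P) x + (aeval φ) (v * (X - C (lam s)) ^ n) x := by
      have := congrArg (fun p : K[X] => (aeval φ) p x) huv
      simpa [map_add, LinearMap.add_apply] using this.symm
    have hv0 : (aeval φ) (v * (X - C (lam s)) ^ n) x = 0 := by
      rw [map_mul, Module.End.mul_apply, map_pow, hop, hx0, map_zero]
    rw [hx', hv0, add_zero, map_mul, Module.End.mul_apply]
    have hPx : (aeval φ) P x ∈ F s := by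
      have := hprod s 0 (by omega) x (by simp [hF0])
      simpa [hP] using this
    exact aux_stable_aeval φ (F s) (hstab s) u hPx
  -- part (b) key claim
  have partb : ∀ k a : ℕ, a + k = d + 1 → ∀ x : V,
      (aeval φ) (∏ t ∈ Finset.Icc a d, (X - C (lam t))) x = 0 →
      x ∈ ⨆ s ∈ Finset.Icc a d, LinearMap.ker ((φ - lam s • 1) ^ n) := by
    intro k
    induction k with
    | zero =>
        intro a ha x hx
        have : Finset.Icc a d = ∅ := by
          apply Finset.Icc_eq_empty
          omega
        rw [this] at hx ⊢
        simp only [Finset.prod_empty, map_one, Module.End.one_apply] at hx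
        simp [hx]
    | succ k ih =>
        intro a ha x hx
        have had : a ≤ d := by omega
        have hIcc : Finset.Icc a d = Finset.Ico a (d + 1) := by
          rw [Finset.Ico_add_one_right_eq_Icc]
        have hIcc' : Finset.Icc (a+1) d = Finset.Ico (a+1) (d + 1) := by
          rw [Finset.Ico_add_one_right_eq_Icc]
        rw [hIcc, Finset.prod_eq_prod_Ico_succ_bot (by omega), mul_comm, map_mul,
          Module.End.mul_apply, heval] at hx
        rw [← hIcc'] at hx
        have hy := ih (a + 1) (by omega) _ hx
        set Sup' := ⨆ s ∈ Finset.Icc (a+1) d, LinearMap.ker ((φ - lam s • 1) ^ n) with hSup'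
        -- surjectivity of (φ - lam a • 1) on Sup'
        have hsurj : Sup' ≤ Submodule.map (φ - lam a • 1) Sup' := by
          rw [hSup']
          apply iSup₂_le
          intro s hs
          have hs' := Finset.mem_Icc.1 hs
          have hca : lam s - lam a ≠ 0 := by
            apply sub_ne_zero_of_ne
            exact hq s a hs'.2 had (by omega)
          have hkey : (φ - lam s • 1) + (lam s - lam a) • 1 = φ - lam a • 1 := by
            rw [sub_smul]; abel
          calc LinearMap.ker ((φ - lam s • 1) ^ n)
              ≤ Submodule.map ((φ - lam s • 1) + (lam s - lam a) • 1)
                (LinearMap.ker ((φ - lam s • 1) ^ n)) :=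
                aux_surj_on_ker (φ - lam s • 1) (lam s - lam a) hca n
            _ = Submodule.map (φ - lam a • 1) (LinearMap.ker ((φ - lam s • 1) ^ n)) := by
                rw [hkey]
            _ ≤ Submodule.map (φ - lam a • 1)
                (⨆ s ∈ Finset.Icc (a+1) d, LinearMap.ker ((φ - lam s • 1) ^ n)) :=
                Submodule.map_mono (le_iSup₂ (f := fun s _ =>
                  LinearMap.ker ((φ - lam s • 1) ^ n)) s hs)
        obtain ⟨z, hz, hz'⟩ := hsurj hy
        have hxz : x - z ∈ LinearMap.ker ((φ - lam a • 1) ^ n) := by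
          have h0 : (φ - lam a • 1) (x - z) = 0 := by
            rw [map_sub, hz']
            have : (φ - lam a • 1) x = φ x - lam a • x := by
              simp [LinearMap.sub_apply]
            rw [this]
            abel
          obtain ⟨m, hm⟩ : ∃ m, n = m + 1 := ⟨n - 1, by omega⟩
          simp only [LinearMap.mem_ker, hm, pow_succ, Module.End.mul_apply, h0, map_zero]
        have hsub : Sup' ≤ ⨆ s ∈ Finset.Icc a d, LinearMap.ker ((φ - lam s • 1) ^ n) := by
          rw [hSup']
          apply iSup₂_le
          intro s hs
          have hs' := Finset.mem_Icc.1 hs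
          exact le_iSup₂ (f := fun s _ => LinearMap.ker ((φ - lam s • 1) ^ n)) s
            (Finset.mem_Icc.2 ⟨by omega, hs'.2⟩)
        have hxmem : x = z + (x - z) := by abel
        rw [hxmem]
        exact Submodule.add_mem _ (hsub hz)
          ((le_iSup₂ (f := fun s _ => LinearMap.ker ((φ - lam s • 1) ^ n)) a
            (Finset.mem_Icc.2 ⟨le_refl a, had⟩)) hxz)
  -- conclude
  intro r hr
  apply le_antisymm
  · intro x hx
    apply partb (d + 1 - r) r (by omega) x
    have h' := hprod (d + 1 - r) r (by omega) x hx
    rw [show r + (d + 1 - r) = d + 1 by omega, hFtop] at h'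
    rw [← Finset.Ico_add_one_right_eq_Icc]
    simpa using h'
  · apply iSup₂_le
    intro s hs
    have hs' := Finset.mem_Icc.1 hs
    exact le_trans (parta s hs'.2) (hmono r s hs'.1)
end

section
/- Let V be a finite-dimensional vector space over a field K, N a nilpotent endomorphism with N^{d+1} = 0 where d = 2t is even. Suppose (F^j)_{0≤j≤d+1} is the decreasing filtration given by F^j = Σ_i ker(N^{i+1}) ∩ im(N^{i-d+2j}) = Σ_i ker(N^{i+1}) ∩ im(N^{i-d+2j-1}), and suppose F^e = im(N^e) holds for all t+1 ≤ e ≤ d. Then ker(N) ∩ im(N) ⊆ F^e for all t+1 ≤ e ≤ d; in particular F^d = ker(N) ∩ im(N). -/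
/-- For even `d = 2t` (`t ≥ 1`), `N` nilpotent with `N^(d+1) = 0`, and
`F^j = ⨆ i, ker(N^(i+1)) ⊓ im(N^(i-d+2j)) = ⨆ i, ker(N^(i+1)) ⊓ im(N^(i-d+2j-1))`
(negative powers read as identity, via truncated subtraction), if `F^e = im(N^e)`
for all `t+1 ≤ e ≤ d`, then `ker N ⊓ im N ⊆ F^e` for all `t+1 ≤ e ≤ d`; in
particular `F^d = ker N ⊓ im N`. -/
theorem stmt12 (K V : Type*) [Field K] [AddCommGroup V] [Module K V] [FiniteDimensional K V]
    (t d : ℕ) (ht : 1 ≤ t) (hd : d = 2 * t)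
    (N : Module.End K V) (hN : N ^ (d + 1) = 0)
    (F : ℕ → Submodule K V)
    (hF : ∀ j, F j =
      ⨆ i : ℕ, LinearMap.ker (N ^ (i + 1)) ⊓ LinearMap.range (N ^ (i + 2 * j - d)))
    (hF' : ∀ j, F j =
      ⨆ i : ℕ, LinearMap.ker (N ^ (i + 1)) ⊓ LinearMap.range (N ^ (i + 2 * j - (d + 1))))
    (hrange : ∀ e, t + 1 ≤ e → e ≤ d → F e = LinearMap.range (N ^ e)) :
    (∀ e, t + 1 ≤ e → e ≤ d → LinearMap.ker N ⊓ LinearMap.range N ≤ F e) ∧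
      F d = LinearMap.ker N ⊓ LinearMap.range N := by
  subst hd
  have hmono : ∀ a b : ℕ, a ≤ b →
      LinearMap.range (N ^ b) ≤ LinearMap.range (N ^ a) := by
    intro a b h
    obtain ⟨c, rfl⟩ := Nat.exists_eq_add_of_le h
    rw [pow_add, Module.End.mul_eq_comp]
    exact LinearMap.range_comp_le_range _ _
  have key : ∀ e, t + 1 ≤ e → e ≤ 2 * t →
      LinearMap.ker N ⊓ LinearMap.range N ≤ F e := by
    intro e he1 he2
    induction e with
    | zero => omega
    | succ e ih =>
      rcases Nat.lt_or_ge e (t + 1) with h | h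
      · have het : e = t := by omega
        rw [het, hF' (t + 1)]
        refine le_trans ?_ (le_iSup _ 0)
        have h1 : 0 + 2 * (t + 1) - (2 * t + 1) = 1 := by omega
        rw [h1, zero_add, pow_one]
      · have hFe := ih h (by omega)
        rw [hrange e h (by omega)] at hFe
        rw [hF' (e + 1)]
        refine le_trans ?_ (le_iSup _ 0)
        refine le_inf ?_ ?_
        · rw [zero_add, pow_one]; exact inf_le_left
        · exact le_trans hFe (hmono _ _ (by omega))
  refine ⟨key, ?_⟩
  have hd : F (2 * t) = LinearMap.range (N ^ (2 * t)) :=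
    hrange (2 * t) (by omega) le_rfl
  refine le_antisymm ?_ (key (2 * t) (by omega) le_rfl)
  rw [hd]
  refine le_inf ?_ (hmono 1 (2 * t) (by omega) |>.trans_eq (by rw [pow_one]))
  rintro x ⟨y, rfl⟩
  rw [LinearMap.mem_ker, ← Module.End.mul_apply, ← pow_succ', hN, LinearMap.zero_apply]
end

section
/- Let K be a field, q ∈ K such that the powers q^s for s ∈ ℕ are pairwise distinct. Let (E_1^{r,s}, d_1) be a first-quadrant spectral sequence of K-vector spaces equipped with an endomorphism φ commuting with all differentials and acting on each E_1^{r,s} as multiplication by q^s. Then all differentials d_m for m ≥ 2 vanish, i.e. the spectral sequence degenerates at E_2. -/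
/-- A first-quadrant spectral sequence of `K`-vector spaces with a
compatible endomorphism `φ` acting on each `E_m^{r,s}` (with `s ≥ 0`) as
multiplication by `q^s`, where the powers `q^s` (`s ∈ ℕ`) are pairwise distinct,
degenerates at `E_2`: all differentials `d_m` with `m ≥ 2` vanish.  First-quadrant
means the terms with `r < 0` or `s < 0` are trivial. -/
theorem stmt16 (K : Type*) [Field K] (q : K)
    (hq : ∀ s s' : ℕ, s ≠ s' → q ^ s ≠ q ^ s')
    (E : ℕ → ℤ → ℤ → Type*) [∀ m r s, AddCommGroup (E m r s)] [∀ m r s, Module K (E m r s)]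
    (hquad : ∀ m : ℕ, ∀ r s : ℤ, (r < 0 ∨ s < 0) → Subsingleton (E m r s))
    (d : ∀ (m : ℕ) (r s : ℤ), E m r s →ₗ[K] E m (r + m) (s - m + 1))
    (φ : ∀ (m : ℕ) (r s : ℤ), E m r s →ₗ[K] E m r s)
    (hφ : ∀ (m : ℕ) (r s : ℤ), 0 ≤ s → φ m r s = q ^ s.toNat • LinearMap.id)
    (hcomm : ∀ (m : ℕ) (r s : ℤ),
      (φ m (r + m) (s - m + 1)) ∘ₗ (d m r s) = (d m r s) ∘ₗ (φ m r s)) :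
    ∀ m : ℕ, 2 ≤ m → ∀ r s : ℤ, d m r s = 0 := by
  intro m hm r s
  ext x
  simp only [LinearMap.zero_apply]
  by_cases hs : 0 ≤ s
  · by_cases hs' : 0 ≤ s - m + 1
    · have h := congrArg (fun f => f x) (hcomm m r s)
      simp only [LinearMap.comp_apply, hφ m (r + m) (s - m + 1) hs', hφ m r s hs,
        LinearMap.smul_apply, LinearMap.id_apply, map_smul] at h
      have hne : (s - m + 1).toNat ≠ s.toNat := by
        intro hEq
        have h1 : ((s - m + 1).toNat : ℤ) = s - m + 1 := Int.toNat_of_nonneg hs'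
        have h2 : ((s.toNat : ℤ)) = s := Int.toNat_of_nonneg hs
        omega
      have hsub : (q ^ (s - m + 1).toNat - q ^ s.toNat) • d m r s x = 0 := by
        rw [sub_smul, h, sub_self]
      have hq0 : q ^ (s - m + 1).toNat - q ^ s.toNat ≠ 0 :=
        sub_ne_zero.mpr (hq _ _ hne)
      exact (smul_eq_zero.mp hsub).resolve_left hq0
    · have := hquad m (r + m) (s - m + 1) (Or.inr (by omega))
      exact Subsingleton.elim _ _
  · have := hquad m r s (Or.inr (by omega))
    rw [Subsingleton.elim x 0, map_zero]
end
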